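/- Under the duality hypothesis on T_0,…,T_5, for every v ∈ ℂ: Λ_{(7,7,4,4,1)/(6,3,3)}(v) = Λ_{(10,7,7,4,4)/(6,6,3,3)}(v + (8/5)i). -/

import Mathlib

/-!
Transposing the Jacobi–Trudi matrix of `μ/λ` turns it, entry by entry, into the matrix of the
dual skew diagram with rows `μ'_j = λ_j + a` and `λ'_k = μ_k + a - 5` (when
`λ_1 + 5 = μ_1 + a`, which makes the shifts match): the index `m` becomes
`5 - m` and the spectral parameter moves by `8i/5`, which is exactly the duality `T'_m(w) =
T'_{5-m}(w + 8i/5)` (valid also for `m ∉ [0, 5]`, where both sides vanish).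
-/

noncomputable section

/-- `T'_m`: equal to `T_m` for `0 ≤ m ≤ 5`, and the zero function otherwise. -/
def Tp (T : ℤ → ℂ → ℂ) (m : ℤ) : ℂ → ℂ :=
  if 0 ≤ m ∧ m ≤ 5 then T m else 0

/-- `Λ_{μ/λ}(v) := det_{1 ≤ j,k ≤ d} T'_{μ_j - λ_k - j + k}(v + i(d - μ_1 + μ_j + λ_k - j - k + 1))`,
with rows and columns indexed by `j k : Fin d` (0-based, so row `j+1`, column `k+1`). -/
def Lam {d : ℕ} [NeZero d] (T : ℤ → ℂ → ℂ) (μ lam : Fin d → ℤ) (v : ℂ) : ℂ :=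
  Matrix.det (Matrix.of fun j k : Fin d =>
    Tp T (μ j - lam k - ((j : ℕ) : ℤ) + ((k : ℕ) : ℤ))
      (v + Complex.I *
        (((d : ℤ) - μ 0 + μ j + lam k - ((j : ℕ) : ℤ) - ((k : ℕ) : ℤ) - 1 : ℤ) : ℂ)))

/-- The duality relation `T_m(v) = T_{5-m}(v + (8/5)i)` for `m = 0,…,5`. -/
def DualityHyp (T : ℤ → ℂ → ℂ) : Prop :=
  ∀ m : ℤ, 0 ≤ m → m ≤ 5 → ∀ v : ℂ, T m v = T (5 - m) (v + (8 / 5 : ℂ) * Complex.I)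

theorem Tp_eq_Tp_five_sub {T : ℤ → ℂ → ℂ} (hdual : DualityHyp T) (m : ℤ) (w : ℂ) :
    Tp T m w = Tp T (5 - m) (w + (8 / 5 : ℂ) * Complex.I) := by
  unfold Tp
  by_cases h : 0 ≤ m ∧ m ≤ 5
  · rw [if_pos h, if_pos ⟨by omega, by omega⟩]
    exact hdual m h.1 h.2 w
  · rw [if_neg h, if_neg (by omega)]
    rfl

theorem Lam_eq_Lam_dual {d : ℕ} [NeZero d] {T : ℤ → ℂ → ℂ} (hdual : DualityHyp T)
    {μ lam μ' lam' : Fin d → ℤ} (a : ℤ) (hμ' : ∀ j, μ' j = lam j + a)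
    (hlam' : ∀ k, lam' k = μ k + a - 5) (h0 : lam 0 + 5 = μ 0 + a) (v : ℂ) :
    Lam T μ lam v = Lam T μ' lam' (v + (8 / 5 : ℂ) * Complex.I) := by
  rw [Lam, Lam, ← Matrix.det_transpose]
  congr 1
  ext j k
  rw [Matrix.transpose_apply, Matrix.of_apply, Matrix.of_apply, Tp_eq_Tp_five_sub hdual,
    hμ', hμ', hlam']
  congr 1
  · ring
  · have h0' : (lam 0 : ℂ) + 5 = μ 0 + a := by exact_mod_cast h0
    push_cast
    linear_combination Complex.I * h0'

/-- Duality relation (7): `Λ_{(7,7,4,4,1)/(6,3,3)}(v) = Λ_{(10,7,7,4,4)/(6,6,3,3)}(v + (8/5)i)`. -/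
theorem lam_duality_77441_633 (T : ℤ → ℂ → ℂ) (hdual : DualityHyp T) (v : ℂ) :
    Lam T ![7, 7, 4, 4, 1] ![6, 3, 3, 0, 0] v =
      Lam T ![10, 7, 7, 4, 4] ![6, 6, 3, 3, 0] (v + (8 / 5 : ℂ) * Complex.I) :=
  Lam_eq_Lam_dual hdual 4 (by decide) (by decide) (by decide) v

end
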